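/- arXiv:2110.02440 — 2 statements merged into one kernel-verified Lean document; each statement's English description precedes it below -/
import Mathlib

section
/- Under consistency, Z ⊥ Y(z,m) | X, Z ⊥ M(z) | X, and Y(z,m) ⊥ M | (Z,L,X), the interventional indirect effect is identified: IIE = Σ_{x,l,m} E[Y | Z=1, L=l, M=m, X=x] P(L=l | Z=1, X=x) (P(M=m | Z=1, X=x) − P(M=m | Z=0, X=x)) P(X=x). -/
open Finset

noncomputable def pr {Ω : Type*} [Fintype Ω] (P : Ω → ℝ) (A : Set Ω) : ℝ :=
  ∑ ω : Ω, A.indicator P ω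

noncomputable def cpr {Ω : Type*} [Fintype Ω] (P : Ω → ℝ) (A B : Set Ω) : ℝ :=
  pr P (A ∩ B) / pr P B

noncomputable def cexp {Ω : Type*} [Fintype Ω] (P : Ω → ℝ) (f : Ω → ℝ) (B : Set Ω) : ℝ :=
  (∑ ω : Ω, B.indicator (fun ω => P ω * f ω) ω) / pr P B

noncomputable def ex {Ω : Type*} [Fintype Ω] (P : Ω → ℝ) (f : Ω → ℝ) : ℝ :=
  ∑ ω : Ω, P ω * f ω

def CondIndepFun {Ω : Type*} [Fintype Ω] (P : Ω → ℝ) {α β γ : Type*}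
    (A : Ω → α) (B : Ω → β) (C : Ω → γ) : Prop :=
  ∀ a b c,
    pr P {ω | A ω = a ∧ B ω = b ∧ C ω = c} * pr P {ω | C ω = c} =
      pr P {ω | A ω = a ∧ C ω = c} * pr P {ω | B ω = b ∧ C ω = c}

section Aux
variable {Ω : Type*} [Fintype Ω] (P : Ω → ℝ)

lemma pr_mono (hP : ∀ ω, 0 ≤ P ω) {A B : Set Ω} (h : A ⊆ B) : pr P A ≤ pr P B := by
  unfold pr
  exact Finset.sum_le_sum fun ω _ => Set.indicator_le_indicator_of_subset h hP ω

lemma pr_congr {A B : Set Ω} (h : ∀ ω, ω ∈ A ↔ ω ∈ B) : pr P A = pr P B := by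
  have : A = B := Set.ext h
  rw [this]

open Classical in
lemma num_eq (f : Ω → ℝ) (B : Set Ω) :
    ∑ ω : Ω, B.indicator (fun ω => P ω * f ω) ω
      = ∑ a ∈ Finset.image f Finset.univ, a * pr P ({ω | f ω = a} ∩ B) := by
  have h : ∀ a, a * pr P ({ω | f ω = a} ∩ B)
      = ∑ ω : Ω, a * ({ω | f ω = a} ∩ B).indicator P ω := by
    intro a; rw [pr, Finset.mul_sum]
  simp_rw [h]
  rw [Finset.sum_comm]
  refine Finset.sum_congr rfl fun ω _ => ?_
  rw [Finset.sum_eq_single (f ω)]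
  · by_cases hω : ω ∈ B
    · rw [Set.indicator_of_mem hω,
        Set.indicator_of_mem (show ω ∈ {ω' | f ω' = f ω} ∩ B from ⟨rfl, hω⟩)]; ring
    · rw [Set.indicator_of_notMem hω, Set.indicator_of_notMem (by simp [hω])]; ring
  · intro a _ ha
    rw [Set.indicator_of_notMem (by simp [Ne.symm ha])]; ring
  · intro h; exact absurd (Finset.mem_image_of_mem f (Finset.mem_univ ω)) h

lemma cexp_transfer (f : Ω → ℝ) (B C : Set Ω) (hB : 0 < pr P B) (hC : 0 < pr P C)
    (h : ∀ a, pr P ({ω | f ω = a} ∩ B) * pr P C = pr P ({ω | f ω = a} ∩ C) * pr P B) :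
    cexp P f B = cexp P f C := by
  classical
  unfold cexp
  rw [num_eq, num_eq, div_eq_div_iff hB.ne' hC.ne', Finset.sum_mul, Finset.sum_mul]
  refine Finset.sum_congr rfl fun a _ => ?_
  rw [mul_assoc, mul_assoc, h a]

lemma cexp_congr (f g : Ω → ℝ) (B : Set Ω) (h : ∀ ω ∈ B, f ω = g ω) :
    cexp P f B = cexp P g B := by
  unfold cexp
  congr 1
  refine Finset.sum_congr rfl fun ω _ => ?_
  by_cases hω : ω ∈ B
  · rw [Set.indicator_of_mem hω, Set.indicator_of_mem hω, h ω hω]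
  · rw [Set.indicator_of_notMem hω, Set.indicator_of_notMem hω]

lemma cexp_total {𝓛 : Type*} [Fintype 𝓛] (f : Ω → ℝ) (L : Ω → 𝓛) (B : Set Ω)
    (hB : 0 < pr P B) (hBl : ∀ l, 0 < pr P ({ω | L ω = l} ∩ B)) :
    ∑ l : 𝓛, cexp P f ({ω | L ω = l} ∩ B) * cpr P {ω | L ω = l} B = cexp P f B := by
  classical
  unfold cexp cpr
  have h : ∀ l : 𝓛,
      (∑ ω : Ω, ({ω | L ω = l} ∩ B).indicator (fun ω => P ω * f ω) ω) /
          pr P ({ω | L ω = l} ∩ B) * (pr P ({ω | L ω = l} ∩ B) / pr P B)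
      = (∑ ω : Ω, ({ω | L ω = l} ∩ B).indicator (fun ω => P ω * f ω) ω) / pr P B := by
    intro l
    have h1 := (hBl l).ne'
    have h2 := hB.ne'
    field_simp
  simp_rw [h]
  rw [← Finset.sum_div]
  congr 1
  rw [Finset.sum_comm]
  refine Finset.sum_congr rfl fun ω _ => ?_
  rw [Finset.sum_eq_single (L ω)]
  · by_cases hω : ω ∈ B
    · rw [Set.indicator_of_mem (show ω ∈ {ω' | L ω' = L ω} ∩ B from ⟨rfl, hω⟩),
        Set.indicator_of_mem hω]
    · rw [Set.indicator_of_notMem (by simp [hω]), Set.indicator_of_notMem hω]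
  · intro l _ hl; rw [Set.indicator_of_notMem (by simp [Ne.symm hl])]
  · simp

end Aux

/-- Identification of the interventional indirect effect (Proposition 3.2, IIE). -/
theorem iie_identification {Ω 𝓜 𝓛 𝓧 : Type*} [Fintype Ω] [Fintype 𝓜] [Fintype 𝓛] [Fintype 𝓧]
    (P : Ω → ℝ) (hP : ∀ ω, 0 ≤ P ω) (hP1 : ∑ ω : Ω, P ω = 1)
    (Z : Ω → Bool) (L : Ω → 𝓛) (M : Ω → 𝓜) (X : Ω → 𝓧) (Y : Ω → ℝ)
    (Ypo : Bool → 𝓜 → Ω → ℝ) (Mpo : Bool → Ω → 𝓜)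
    (hpos : ∀ z l m x, 0 < pr P {ω | Z ω = z ∧ L ω = l ∧ M ω = m ∧ X ω = x})
    (hconsM : ∀ ω, Mpo (Z ω) ω = M ω)
    (hconsY : ∀ ω, Y ω = Ypo (Z ω) (M ω) ω)
    (hA2 : ∀ z m, CondIndepFun P Z (fun ω => Ypo z m ω) X)
    (hA3 : ∀ z, CondIndepFun P Z (Mpo z) X)
    (hA4 : ∀ z m, CondIndepFun P (fun ω => Ypo z m ω) M (fun ω => (Z ω, L ω, X ω))) :
    -- IIE = E[Y(1, G(1|X))] − E[Y(1, G(0|X))], where G(z|X) is an independent draw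
    -- from the conditional law of M given Z = z and X:
    (∑ x : 𝓧, ∑ m : 𝓜,
        cexp P (fun ω => Ypo true m ω) {ω | X ω = x} *
          cpr P {ω | M ω = m} {ω | Z ω = true ∧ X ω = x} * pr P {ω | X ω = x}) -
      (∑ x : 𝓧, ∑ m : 𝓜,
        cexp P (fun ω => Ypo true m ω) {ω | X ω = x} *
          cpr P {ω | M ω = m} {ω | Z ω = false ∧ X ω = x} * pr P {ω | X ω = x}) =
      ∑ x : 𝓧, ∑ l : 𝓛, ∑ m : 𝓜,
        cexp P Y {ω | Z ω = true ∧ L ω = l ∧ M ω = m ∧ X ω = x} *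
          cpr P {ω | L ω = l} {ω | Z ω = true ∧ X ω = x} *
          (cpr P {ω | M ω = m} {ω | Z ω = true ∧ X ω = x} -
            cpr P {ω | M ω = m} {ω | Z ω = false ∧ X ω = x}) *
          pr P {ω | X ω = x} := by
  classical
  have hΩ : Nonempty Ω := by
    by_contra h
    rw [not_nonempty_iff] at h
    rw [Finset.univ_eq_empty, Finset.sum_empty] at hP1
    norm_num at hP1
  obtain ⟨ω₀⟩ := hΩ
  set l₀ := L ω₀ with hl₀
  set m₀ := M ω₀ with hm₀
  have hposX : ∀ x, 0 < pr P {ω | X ω = x} := fun x =>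
    lt_of_lt_of_le (hpos true l₀ m₀ x)
      (pr_mono P hP fun ω hω => hω.2.2.2)
  have hposZX : ∀ z x, 0 < pr P {ω | Z ω = z ∧ X ω = x} := fun z x =>
    lt_of_lt_of_le (hpos z l₀ m₀ x)
      (pr_mono P hP fun ω hω => ⟨hω.1, hω.2.2.2⟩)
  have hposZLX : ∀ l x, 0 < pr P {ω | Z ω = true ∧ L ω = l ∧ X ω = x} := fun l x =>
    lt_of_lt_of_le (hpos true l m₀ x)
      (pr_mono P hP fun ω hω => ⟨hω.1, hω.2.1, hω.2.2.2⟩)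
  have key : ∀ (x : 𝓧) (m : 𝓜),
      (∑ l : 𝓛, cexp P Y {ω | Z ω = true ∧ L ω = l ∧ M ω = m ∧ X ω = x} *
        cpr P {ω | L ω = l} {ω | Z ω = true ∧ X ω = x})
      = cexp P (fun ω => Ypo true m ω) {ω | X ω = x} := by
    intro x m
    have stepA : ∀ l, cexp P Y {ω | Z ω = true ∧ L ω = l ∧ M ω = m ∧ X ω = x}
        = cexp P (fun ω => Ypo true m ω) {ω | Z ω = true ∧ L ω = l ∧ X ω = x} := by
      intro l
      have h1 : cexp P Y {ω | Z ω = true ∧ L ω = l ∧ M ω = m ∧ X ω = x}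
          = cexp P (fun ω => Ypo true m ω) {ω | Z ω = true ∧ L ω = l ∧ M ω = m ∧ X ω = x} := by
        apply cexp_congr
        intro ω hω
        obtain ⟨hz, hl, hm, hx⟩ := hω
        rw [hconsY ω, hz, hm]
      rw [h1]
      apply cexp_transfer _ _ _ _ (hpos true l m x) (hposZLX l x)
      intro a
      have hI := hA4 true m a m (true, l, x)
      have e1 : pr P ({ω | Ypo true m ω = a} ∩ {ω | Z ω = true ∧ L ω = l ∧ M ω = m ∧ X ω = x})
          = pr P {ω | Ypo true m ω = a ∧ M ω = m ∧ (Z ω, L ω, X ω) = (true, l, x)} := by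
        apply pr_congr
        intro ω
        simp only [Set.mem_inter_iff, Set.mem_setOf_eq, Prod.mk.injEq]
        tauto
      have e2 : pr P {ω | Z ω = true ∧ L ω = l ∧ X ω = x}
          = pr P {ω | (Z ω, L ω, X ω) = (true, l, x)} := by
        apply pr_congr
        intro ω
        simp only [Set.mem_setOf_eq, Prod.mk.injEq]
      have e3 : pr P ({ω | Ypo true m ω = a} ∩ {ω | Z ω = true ∧ L ω = l ∧ X ω = x})
          = pr P {ω | Ypo true m ω = a ∧ (Z ω, L ω, X ω) = (true, l, x)} := by
        apply pr_congr
        intro ω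
        simp only [Set.mem_inter_iff, Set.mem_setOf_eq, Prod.mk.injEq]
      have e4 : pr P {ω | Z ω = true ∧ L ω = l ∧ M ω = m ∧ X ω = x}
          = pr P {ω | M ω = m ∧ (Z ω, L ω, X ω) = (true, l, x)} := by
        apply pr_congr
        intro ω
        simp only [Set.mem_setOf_eq, Prod.mk.injEq]
        tauto
      rw [e1, e2, e3, e4]
      exact hI
    have stepB : (∑ l : 𝓛, cexp P (fun ω => Ypo true m ω) {ω | Z ω = true ∧ L ω = l ∧ X ω = x} *
        cpr P {ω | L ω = l} {ω | Z ω = true ∧ X ω = x})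
        = cexp P (fun ω => Ypo true m ω) {ω | Z ω = true ∧ X ω = x} := by
      have hset : ∀ l : 𝓛, ({ω | L ω = l} ∩ {ω | Z ω = true ∧ X ω = x})
          = {ω | Z ω = true ∧ L ω = l ∧ X ω = x} := by
        intro l
        ext ω
        simp only [Set.mem_inter_iff, Set.mem_setOf_eq]
        tauto
      rw [← cexp_total P (fun ω => Ypo true m ω) L {ω | Z ω = true ∧ X ω = x}
        (hposZX true x) (fun l => by rw [hset l]; exact hposZLX l x)]
      refine Finset.sum_congr rfl fun l _ => ?_
      rw [hset l]
    have stepC : cexp P (fun ω => Ypo true m ω) {ω | Z ω = true ∧ X ω = x}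
        = cexp P (fun ω => Ypo true m ω) {ω | X ω = x} := by
      apply cexp_transfer _ _ _ _ (hposZX true x) (hposX x)
      intro a
      have hI := hA2 true m true a x
      have e1 : pr P ({ω | Ypo true m ω = a} ∩ {ω | Z ω = true ∧ X ω = x})
          = pr P {ω | Z ω = true ∧ Ypo true m ω = a ∧ X ω = x} := by
        apply pr_congr
        intro ω
        simp only [Set.mem_inter_iff, Set.mem_setOf_eq]
        tauto
      have e2 : pr P ({ω | Ypo true m ω = a} ∩ {ω | X ω = x})
          = pr P {ω | Ypo true m ω = a ∧ X ω = x} := by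
        apply pr_congr
        intro ω
        simp only [Set.mem_inter_iff, Set.mem_setOf_eq]
      rw [e1, e2, hI]
      ring
    calc (∑ l : 𝓛, cexp P Y {ω | Z ω = true ∧ L ω = l ∧ M ω = m ∧ X ω = x} *
          cpr P {ω | L ω = l} {ω | Z ω = true ∧ X ω = x})
        = ∑ l : 𝓛, cexp P (fun ω => Ypo true m ω) {ω | Z ω = true ∧ L ω = l ∧ X ω = x} *
            cpr P {ω | L ω = l} {ω | Z ω = true ∧ X ω = x} :=
          Finset.sum_congr rfl fun l _ => by rw [stepA l]
      _ = cexp P (fun ω => Ypo true m ω) {ω | Z ω = true ∧ X ω = x} := stepB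
      _ = cexp P (fun ω => Ypo true m ω) {ω | X ω = x} := stepC
  rw [← Finset.sum_sub_distrib]
  refine Finset.sum_congr rfl fun x _ => ?_
  rw [← Finset.sum_sub_distrib, Finset.sum_comm]
  refine Finset.sum_congr rfl fun m _ => ?_
  rw [← key x m, Finset.sum_mul, Finset.sum_mul, Finset.sum_mul, Finset.sum_mul,
    ← Finset.sum_sub_distrib]
  exact Finset.sum_congr rfl fun l _ => by ring
end

section
/- For discrete random variables (X, Z, L, M, Y) with strictly positive conditioning probabilities, η3 = Σ_{x,l,m} E[Y | Z=1, L=l, M=m, X=x] P(L=l | Z=1, X=x) P(M=m | Z=1, X=x) P(X=x) equals E[ 1{Z=1} Y / P(Z=1 | X) · P(L | Z=1, X) / P(L | Z=1, M, X) ]. -/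
open Finset

/-- Weighting identity for η₃ (Theorem 3.3). -/
theorem eta3_weighting {Ω 𝓜 𝓛 𝓧 : Type*} [Fintype Ω] [Fintype 𝓜] [Fintype 𝓛] [Fintype 𝓧]
    (P : Ω → ℝ) (hP : ∀ ω, 0 ≤ P ω) (hP1 : ∑ ω : Ω, P ω = 1)
    (Z : Ω → Bool) (L : Ω → 𝓛) (M : Ω → 𝓜) (X : Ω → 𝓧) (Y : Ω → ℝ)
    (hpos : ∀ z l m x, 0 < pr P {ω | Z ω = z ∧ L ω = l ∧ M ω = m ∧ X ω = x})
    (hposL : ∀ l m x, 0 < cpr P {ω | L ω = l} {ω | Z ω = true ∧ M ω = m ∧ X ω = x}) :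
    (∑ x : 𝓧, ∑ l : 𝓛, ∑ m : 𝓜,
        cexp P Y {ω | Z ω = true ∧ L ω = l ∧ M ω = m ∧ X ω = x} *
          cpr P {ω | L ω = l} {ω | Z ω = true ∧ X ω = x} *
          cpr P {ω | M ω = m} {ω | Z ω = true ∧ X ω = x} *
          pr P {ω | X ω = x}) =
      ex P (fun ω =>
        (if Z ω = true then Y ω else 0) / cpr P {ω' | Z ω' = true} {ω' | X ω' = X ω} *
          cpr P {ω' | L ω' = L ω} {ω' | Z ω' = true ∧ X ω' = X ω} /
          cpr P {ω' | L ω' = L ω} {ω' | Z ω' = true ∧ M ω' = M ω ∧ X ω' = X ω}) := by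
  classical
  -- set-reordering facts at the level of `pr`
  have eZ : ∀ x, pr P ({ω | Z ω = true} ∩ {ω | X ω = x}) =
      pr P {ω | Z ω = true ∧ X ω = x} := by
    intro x
    have h : ({ω | Z ω = true} ∩ {ω | X ω = x}) = {ω | Z ω = true ∧ X ω = x} := by
      ext ω; simp only [Set.mem_inter_iff, Set.mem_setOf_eq]
    rw [h]
  have eM : ∀ (m : 𝓜) (x : 𝓧),
      pr P ({ω | M ω = m} ∩ {ω | Z ω = true ∧ X ω = x}) =
      pr P {ω | Z ω = true ∧ M ω = m ∧ X ω = x} := by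
    intro m x
    have h : ({ω | M ω = m} ∩ {ω | Z ω = true ∧ X ω = x}) =
        {ω | Z ω = true ∧ M ω = m ∧ X ω = x} := by
      ext ω; simp only [Set.mem_inter_iff, Set.mem_setOf_eq]; tauto
    rw [h]
  have eL : ∀ (l : 𝓛) (m : 𝓜) (x : 𝓧),
      pr P ({ω | L ω = l} ∩ {ω | Z ω = true ∧ M ω = m ∧ X ω = x}) =
      pr P {ω | Z ω = true ∧ L ω = l ∧ M ω = m ∧ X ω = x} := by
    intro l m x
    have h : ({ω | L ω = l} ∩ {ω | Z ω = true ∧ M ω = m ∧ X ω = x}) =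
        {ω | Z ω = true ∧ L ω = l ∧ M ω = m ∧ X ω = x} := by
      ext ω; simp only [Set.mem_inter_iff, Set.mem_setOf_eq]; tauto
    rw [h]
  -- pointwise expansion of the integrand over cells
  have key : ∀ ω : Ω,
      P ω * ((if Z ω = true then Y ω else 0) /
          cpr P {ω' | Z ω' = true} {ω' | X ω' = X ω} *
          cpr P {ω' | L ω' = L ω} {ω' | Z ω' = true ∧ X ω' = X ω} /
          cpr P {ω' | L ω' = L ω} {ω' | Z ω' = true ∧ M ω' = M ω ∧ X ω' = X ω}) =
      ∑ x : 𝓧, ∑ l : 𝓛, ∑ m : 𝓜,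
        (if M ω = m ∧ L ω = l ∧ X ω = x ∧ Z ω = true then
          P ω * Y ω *
            (pr P {ω' | X ω' = x} / pr P {ω' | Z ω' = true ∧ X ω' = x} *
              cpr P {ω' | L ω' = l} {ω' | Z ω' = true ∧ X ω' = x} *
              (pr P {ω' | Z ω' = true ∧ M ω' = m ∧ X ω' = x} /
                pr P {ω' | Z ω' = true ∧ L ω' = l ∧ M ω' = m ∧ X ω' = x}))
          else 0) := by
    intro ω
    simp only [ite_and, Finset.sum_ite_eq, Finset.mem_univ, if_true]
    by_cases hz : Z ω = true
    · simp only [hz, if_true]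
      simp only [cpr, eZ, eL]
      rw [div_div_eq_mul_div, div_div_eq_mul_div]
      ring
    · simp [hz]
  rw [ex]
  simp only [key]
  conv_rhs => rw [Finset.sum_comm]
  refine Finset.sum_congr rfl fun x _ => ?_
  conv_rhs => rw [Finset.sum_comm]
  refine Finset.sum_congr rfl fun l _ => ?_
  conv_rhs => rw [Finset.sum_comm]
  refine Finset.sum_congr rfl fun m _ => ?_
  -- per-cell identity
  have hsum :
      (∑ ω : Ω, if M ω = m ∧ L ω = l ∧ X ω = x ∧ Z ω = true then
          P ω * Y ω *
            (pr P {ω' | X ω' = x} / pr P {ω' | Z ω' = true ∧ X ω' = x} *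
              cpr P {ω' | L ω' = l} {ω' | Z ω' = true ∧ X ω' = x} *
              (pr P {ω' | Z ω' = true ∧ M ω' = m ∧ X ω' = x} /
                pr P {ω' | Z ω' = true ∧ L ω' = l ∧ M ω' = m ∧ X ω' = x}))
          else 0) =
      (∑ ω : Ω, if Z ω = true ∧ L ω = l ∧ M ω = m ∧ X ω = x then P ω * Y ω else 0) *
            (pr P {ω' | X ω' = x} / pr P {ω' | Z ω' = true ∧ X ω' = x} *
              cpr P {ω' | L ω' = l} {ω' | Z ω' = true ∧ X ω' = x} *
              (pr P {ω' | Z ω' = true ∧ M ω' = m ∧ X ω' = x} /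
                pr P {ω' | Z ω' = true ∧ L ω' = l ∧ M ω' = m ∧ X ω' = x})) := by
    rw [Finset.sum_mul]
    refine Finset.sum_congr rfl fun ω _ => ?_
    rw [ite_mul, zero_mul]
    exact if_congr (by tauto) rfl rfl
  rw [hsum]
  simp only [cexp, Set.indicator_apply, Set.mem_setOf_eq, cpr, eM]
  ring
end
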